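/- For every finite set P of nonempty Cayley permutations, there exists a finite set Q of sequences that are simultaneously inversion sequences and Cayley permutations such that an inversion sequence avoids every pattern in P if and only if it avoids every pattern in Q. -/

import Mathlib

/-- `σ` is an inversion sequence: `σ_i ∈ {0,…,i-1}` (0-indexed: `σ[i] ≤ i`). -/
def IsInvSeq (σ : List ℕ) : Prop := ∀ i < σ.length, σ.getD i 0 ≤ i

/-- `σ` is a Cayley permutation: its value set is `{0,…,max σ}` (downward closed). -/
def IsCayley (σ : List ℕ) : Prop := ∀ v w : ℕ, w ∈ σ → v ≤ w → v ∈ σ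

/-- Maximum diagonal difference `max_i (σ_i - i + 1)` (0-indexed: `max_i (σ[i] - i)`). -/
def mdd (σ : List ℕ) : ℤ :=
  ((List.range σ.length).map (fun i => (σ.getD i 0 : ℤ) - i)).foldr max (-(σ.length : ℤ))

/-- `τ` and `σ` are order-isomorphic sequences of the same length. -/
def OrdIso (τ σ : List ℕ) : Prop :=
  τ.length = σ.length ∧ ∀ i j : ℕ, i < τ.length → j < τ.length →
    (τ.getD i 0 ≤ τ.getD j 0 ↔ σ.getD i 0 ≤ σ.getD j 0)

/-- `σ` contains the pattern `ρ` (i.e. `ρ ⪯ σ`): some subsequence of `σ` is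
order-isomorphic to `ρ`. -/
def ContainsPat (σ ρ : List ℕ) : Prop := ∃ τ : List ℕ, τ.Sublist σ ∧ OrdIso ρ τ

/-- The reduction of `σ`: the `j`-th smallest distinct value is replaced by `j-1`. -/
def red (σ : List ℕ) : List ℕ :=
  σ.map (fun v => (σ.toFinset.filter (fun w => w < v)).card)

/-- Number of distinct values of `σ`. -/
def distv (σ : List ℕ) : ℕ := σ.toFinset.card

/-- Positions (0-indexed) of saturated entries of `σ`. -/
def Sat (σ : List ℕ) : Set ℕ := {i | i < σ.length ∧ (σ.getD i 0 : ℤ) - i = mdd σ}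

/-- `σ` is a ρ-minimal inversion sequence: a minimal element, under pattern
containment, of the set of inversion sequences that are Cayley permutations and
contain `ρ`. -/
def IsMinimalFor (ρ σ : List ℕ) : Prop :=
  IsInvSeq σ ∧ IsCayley σ ∧ ContainsPat σ ρ ∧
  ∀ τ : List ℕ, IsInvSeq τ → IsCayley τ → ContainsPat τ ρ → ContainsPat σ τ → τ = σ

/-!
For `Q` take the Cayley inversion sequences of length at most `4 * ρ.length` containing some
`ρ ∈ P`; as containment is transitive, avoiding `P` implies avoiding `Q`.

Conversely, let `ρ` occur at the positions `W` of an inversion sequence `σ`. Enlarge `W` by the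
first `#W` positions of `σ` that repeat an earlier value, and then by the first occurrences of all
values seen. On the resulting set `T` of at most `4 * #W` positions, every value `σ[t]` has at most
as many smaller values in `σ|T` as there are positions of `T` before `t`, so the reduction of `σ|T`
is an inversion sequence. It is a Cayley permutation in `Q` lying between `ρ` and `σ`.
-/

open Finset
open scoped List

def rank (s : Finset ℕ) (v : ℕ) : ℕ := #{w ∈ s | w < v}

section Rank

variable {s : Finset ℕ} {a b : ℕ}

lemma rank_mono (s : Finset ℕ) : Monotone (rank s) :=
  fun _ _ hab => card_le_card (monotone_filter_right _ fun _ _ hx => hx.trans_le hab)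

lemma rank_lt_rank (hb : b ∈ s) (hba : b < a) : rank s b < rank s a :=
  card_lt_card <| (ssubset_iff_of_subset (monotone_filter_right _ fun _ _ hx => hx.trans hba)).2
    ⟨b, mem_filter.2 ⟨hb, hba⟩, by simp⟩

lemma rank_le_rank_iff (hb : b ∈ s) : rank s a ≤ rank s b ↔ a ≤ b :=
  ⟨fun h => not_lt.1 fun hba => (rank_lt_rank hb hba).not_ge h, fun h => rank_mono s h⟩

lemma rank_lt_card (ha : a ∈ s) : rank s a < #s :=
  card_lt_card <| ssubset_iff_of_subset (filter_subset _ _) |>.2 ⟨a, ha, by simp⟩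

lemma rank_eq_card (h : ∀ x ∈ s, x < a) : rank s a = #s := by
  rw [rank, filter_true_of_mem h]

lemma image_rank (s : Finset ℕ) : s.image (rank s) = range #s := by
  have hsub : s.image (rank s) ⊆ range #s := by
    intro x hx
    obtain ⟨a, ha, rfl⟩ := mem_image.1 hx
    exact mem_range.2 (rank_lt_card ha)
  refine eq_of_subset_of_card_le hsub ?_
  rw [card_range, card_image_of_injOn]
  intro x hx y hy hxy
  by_contra hne
  rcases lt_or_gt_of_ne hne with h | h
  · exact (rank_lt_rank hx h).ne hxy
  · exact (rank_lt_rank hy h).ne' hxy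

lemma rank_sort_getElem (s : Finset ℕ) {i : ℕ} (hi : i < s.sort.length) :
    rank s s.sort[i] = i := by
  have hi' : i < #s := by simpa using hi
  set e := s.orderEmbOfFin rfl
  have he : s.sort[i] = e ⟨i, hi'⟩ := rfl
  have hfilter : {x ∈ s | x < e ⟨i, hi'⟩} = (Iio ⟨i, hi'⟩).map e.toEmbedding := by
    ext x
    simp only [mem_filter, mem_map, mem_Iio, RelEmbedding.coe_toEmbedding]
    constructor
    · rintro ⟨hx, hlt⟩
      obtain ⟨j, rfl⟩ : x ∈ Set.range e := by rw [range_orderEmbOfFin]; exact hx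
      exact ⟨j, e.lt_iff_lt.1 hlt, rfl⟩
    · rintro ⟨j, hj, rfl⟩
      exact ⟨s.orderEmbOfFin_mem rfl j, e.lt_iff_lt.2 hj⟩
  rw [rank, he, hfilter, card_map, Fin.card_Iio]

lemma exists_rank_eq_min (s : Finset ℕ) (n : ℕ) : ∃ m, rank s m = min n #s := by
  rcases lt_or_ge n #s with h | h
  · exact ⟨s.sort[n]'(by simpa using h), by rw [rank_sort_getElem, min_eq_left h.le]⟩
  · obtain ⟨m, hm⟩ := s.exists_nat_subset_range
    exact ⟨m, by rw [rank_eq_card fun x hx => mem_range.1 (hm hx), min_eq_right h]⟩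

lemma exists_initial_segment (s : Finset ℕ) (n : ℕ) :
    ∃ S ⊆ s, #S ≤ n ∧ ∀ v, {x ∈ s | x < v} ⊆ S ∨ (#S = n ∧ ∀ x ∈ S, x < v) := by
  obtain ⟨m, hm⟩ := exists_rank_eq_min s n
  have hcard : #{x ∈ s | x < m} = min n #s := hm
  refine ⟨{x ∈ s | x < m}, filter_subset _ _, hcard ▸ min_le_left _ _, fun v => ?_⟩
  rcases le_or_gt v m with hvm | hmv
  · exact Or.inl (monotone_filter_right _ fun x _ hx => lt_of_lt_of_le hx hvm)
  · rcases min_choice n #s with h | h <;> rw [h] at hcard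
    · exact Or.inr ⟨hcard, fun x hx => (mem_filter.1 hx).2.trans hmv⟩
    · left
      rw [eq_of_subset_of_card_le (filter_subset _ s) hcard.ge]
      exact filter_subset _ _

end Rank

lemma getD_mem {σ : List ℕ} {i : ℕ} (hi : i < σ.length) : σ.getD i 0 ∈ σ := by
  rw [List.getD_eq_getElem _ _ hi]; exact List.getElem_mem hi

section Reduction

variable {σ : List ℕ}

lemma red_eq_map (σ : List ℕ) : red σ = σ.map (rank σ.toFinset) := rfl

@[simp] lemma length_red (σ : List ℕ) : (red σ).length = σ.length := List.length_map _

lemma getD_red {i : ℕ} (hi : i < σ.length) :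
    (red σ).getD i 0 = rank σ.toFinset (σ.getD i 0) := by
  simp [red_eq_map, List.getElem?_eq_getElem hi]

lemma mem_red_iff {w : ℕ} : w ∈ red σ ↔ w < distv σ := by
  rw [red_eq_map, distv, ← mem_range, ← image_rank, mem_image, List.mem_map]
  simp only [List.mem_toFinset]

lemma isCayley_red (σ : List ℕ) : IsCayley (red σ) := fun _ _ hw hvw =>
  mem_red_iff.2 (lt_of_le_of_lt hvw (mem_red_iff.1 hw))

lemma ordIso_red (σ : List ℕ) : OrdIso (red σ) σ := by
  refine ⟨length_red σ, fun i j hi hj => ?_⟩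
  rw [length_red] at hi hj
  rw [getD_red hi, getD_red hj]
  exact rank_le_rank_iff (List.mem_toFinset.2 (getD_mem hj))

end Reduction

section Subsequences

def subseqAt (σ : List ℕ) (T : Finset ℕ) : List ℕ := T.sort.map (σ.getD · 0)

variable {σ τ : List ℕ} {S T : Finset ℕ}

@[simp] lemma length_subseqAt : (subseqAt σ T).length = #T := by simp [subseqAt]

lemma getD_subseqAt {i : ℕ} (hi : i < T.sort.length) :
    (subseqAt σ T).getD i 0 = σ.getD T.sort[i] 0 := by
  simp [subseqAt, List.getElem?_eq_getElem hi]

lemma toFinset_subseqAt : (subseqAt σ T).toFinset = T.image (σ.getD · 0) := by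
  ext; simp [subseqAt]

lemma sort_sublist_sort (h : S ⊆ T) : S.sort <+ T.sort :=
  List.sublist_of_subperm_of_pairwise
    ((sort_nodup S _).subperm fun _ hx => (mem_sort _).2 (h ((mem_sort _).1 hx)))
    (pairwise_sort S _) (pairwise_sort T _)

lemma subseqAt_sublist_subseqAt (h : S ⊆ T) : subseqAt σ S <+ subseqAt σ T :=
  (sort_sublist_sort h).map _

lemma subseqAt_range (σ : List ℕ) : subseqAt σ (range σ.length) = σ := by
  apply List.ext_getElem (by simp)
  intro i h _
  simp [subseqAt, sort_range, List.getElem?_eq_getElem (by simpa using h : i < σ.length)]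

lemma subseqAt_sublist (h : T ⊆ range σ.length) : subseqAt σ T <+ σ := by
  simpa only [subseqAt_range] using subseqAt_sublist_subseqAt (σ := σ) h

lemma exists_subseqAt_eq_of_sublist (h : τ <+ σ) :
    ∃ W ⊆ range σ.length, subseqAt σ W = τ := by
  obtain ⟨is, rfl, his⟩ := List.sublist_eq_map_getElem h
  have hsorted : (is.map Fin.val).Pairwise (· < ·) := List.pairwise_map.2 his
  refine ⟨(is.map Fin.val).toFinset, fun x hx => ?_, ?_⟩
  · obtain ⟨j, -, rfl⟩ := List.mem_map.1 (List.mem_toFinset.1 hx)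
    exact mem_range.2 j.isLt
  · rw [subseqAt, (List.toFinset_sort _ (hsorted.imp ne_of_lt)).2 (hsorted.imp le_of_lt),
      List.map_map]
    exact List.map_congr_left fun j _ => List.getD_eq_getElem _ _ j.isLt

end Subsequences

section Patterns

variable {ρ σ τ : List ℕ}

lemma OrdIso.symm (h : OrdIso σ τ) : OrdIso τ σ :=
  ⟨h.1.symm, fun i j hi hj => (h.2 i j (h.1 ▸ hi) (h.1 ▸ hj)).symm⟩

lemma OrdIso.trans (h₁ : OrdIso ρ σ) (h₂ : OrdIso σ τ) : OrdIso ρ τ :=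
  ⟨h₁.1.trans h₂.1, fun i j hi hj =>
    (h₁.2 i j hi hj).trans (h₂.2 i j (h₁.1 ▸ hi) (h₁.1 ▸ hj))⟩

lemma OrdIso.exists_sublist (h : OrdIso σ τ) {σ' : List ℕ} (hσ' : σ' <+ σ) :
    ∃ τ', τ' <+ τ ∧ OrdIso σ' τ' := by
  obtain ⟨W, hW, rfl⟩ := exists_subseqAt_eq_of_sublist hσ'
  refine ⟨subseqAt τ W, subseqAt_sublist (h.1 ▸ hW), by simp, fun i j hi hj => ?_⟩
  have hi' : i < W.sort.length := by simpa using hi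
  have hj' : j < W.sort.length := by simpa using hj
  have hlt : ∀ {k} (hk : k < W.sort.length), W.sort[k] < σ.length :=
    fun hk => mem_range.1 (hW ((mem_sort _).1 (List.getElem_mem hk)))
  rw [getD_subseqAt hi', getD_subseqAt hj', getD_subseqAt hi', getD_subseqAt hj']
  exact h.2 _ _ (hlt hi') (hlt hj')

lemma ContainsPat.trans (h₁ : ContainsPat σ τ) (h₂ : ContainsPat τ ρ) : ContainsPat σ ρ := by
  obtain ⟨σ₁, hσ₁, hiso₁⟩ := h₁
  obtain ⟨τ₁, hτ₁, hiso₂⟩ := h₂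
  obtain ⟨σ₂, hσ₂, hiso₃⟩ := hiso₁.exists_sublist hτ₁
  exact ⟨σ₂, hσ₂.trans hσ₁, hiso₂.trans hiso₃⟩

lemma ContainsPat.of_ordIso (h : OrdIso σ τ) : ContainsPat σ τ :=
  ⟨σ, List.Sublist.refl σ, h.symm⟩

end Patterns

section FirstOccurrences

variable {σ : List ℕ}

def repeats (σ : List ℕ) : Finset ℕ := {i ∈ range σ.length | σ.idxOf (σ.getD i 0) ≠ i}

lemma repeats_subset_range : repeats σ ⊆ range σ.length := filter_subset _ _

lemma getD_idxOf {v : ℕ} (hv : v ∈ σ) : σ.getD (σ.idxOf v) 0 = v := by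
  rw [List.getD_eq_getElem _ _ (List.idxOf_lt_length_of_mem hv), List.getElem_idxOf]

lemma idxOf_getD_le {i : ℕ} (hi : i < σ.length) : σ.idxOf (σ.getD i 0) ≤ i := by
  have hmem : σ.getD i 0 ∈ σ.take (i + 1) := by
    rw [List.getD_eq_getElem _ _ hi]
    exact List.mem_iff_getElem.2 ⟨i, by simp [hi], by simp⟩
  exact Nat.lt_succ_iff.1 ((List.mem_take_iff_idxOf_lt (getD_mem hi)).1 hmem)

lemma idxOf_getD_lt_of_mem_repeats {i : ℕ} (hi : i ∈ repeats σ) :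
    σ.idxOf (σ.getD i 0) < i := by
  obtain ⟨hi, hne⟩ := mem_filter.1 hi
  exact lt_of_le_of_ne (idxOf_getD_le (mem_range.1 hi)) hne

lemma idxOf_getD_eq_of_notMem_repeats {i : ℕ} (hi : i < σ.length) (hrep : i ∉ repeats σ) :
    σ.idxOf (σ.getD i 0) = i :=
  not_not.1 fun hne => hrep (mem_filter.2 ⟨mem_range.2 hi, hne⟩)

lemma idxOf_notMem_repeats (v : ℕ) : σ.idxOf v ∉ repeats σ := by
  intro h
  have hv : v ∈ σ := List.idxOf_lt_length_iff.1 (mem_range.1 (repeats_subset_range h))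
  exact (mem_filter.1 h).2 (by rw [getD_idxOf hv])

lemma le_card_image_add_rank_repeats {v : ℕ} (hv : v ≤ σ.length) :
    v ≤ #((range v).image (σ.getD · 0)) + rank (repeats σ) v := by
  have hsplit := card_filter_add_card_filter_not (s := range v) (· ∈ repeats σ)
  have hrep : {i ∈ range v | i ∈ repeats σ} = {i ∈ repeats σ | i < v} := by
    ext i; simp only [mem_filter, mem_range, and_comm]
  have hfirst : #{i ∈ range v | i ∉ repeats σ} ≤ #((range v).image (σ.getD · 0)) := by
    have hfix : ∀ i ∈ ({i ∈ range v | i ∉ repeats σ} : Finset ℕ),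
        σ.idxOf (σ.getD i 0) = i := fun i hi =>
      idxOf_getD_eq_of_notMem_repeats ((mem_range.1 (mem_filter.1 hi).1).trans_le hv)
        (mem_filter.1 hi).2
    refine card_le_card_of_injOn _ (fun i hi => mem_image_of_mem _ (mem_filter.1 hi).1) ?_
    intro i hi j hj hij
    rw [← hfix i hi, ← hfix j hj, show σ.getD i 0 = σ.getD j 0 from hij]
  rw [hrep, card_range] at hsplit
  rw [rank]
  omega

/-- The values `u < σ[t]` of `T` whose first occurrence precedes that of `σ[t]` inject, through
those first occurrences, into the positions of `T` before `t`; the remaining (late) values are paid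
for by the repeated positions `S`. -/
lemma rank_image_getD_le {T S : Finset ℕ} (hT : T ⊆ range σ.length)
    (hclosed : ∀ t ∈ T, σ.idxOf (σ.getD t 0) ∈ T) (hST : S ⊆ T) (hS : S ⊆ repeats σ)
    {t : ℕ} (ht : t ∈ T)
    (hlate :
      #{u ∈ T.image (σ.getD · 0) | u < σ.getD t 0 ∧ σ.idxOf (σ.getD t 0) ≤ σ.idxOf u}
        ≤ rank S (σ.idxOf (σ.getD t 0))) :
    rank (T.image (σ.getD · 0)) (σ.getD t 0) ≤ rank T t := by
  set v := σ.getD t 0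
  set p := σ.idxOf v
  set V := T.image (σ.getD · 0)
  have hVmem : ∀ u ∈ V, u ∈ σ := by
    intro u hu
    obtain ⟨i, hi, rfl⟩ := mem_image.1 hu
    exact getD_mem (mem_range.1 (hT hi))
  set early := {u ∈ V | u < v ∧ σ.idxOf u < p}
  have hsplit : rank V v = #early + #{u ∈ V | u < v ∧ p ≤ σ.idxOf u} := by
    rw [rank, ← card_filter_add_card_filter_not (s := {u ∈ V | u < v}) (σ.idxOf · < p)]
    simp only [filter_filter, not_lt, early]
  have hearly : #(early.image σ.idxOf) = #early := by
    refine card_image_of_injOn fun u hu w _ huw => ?_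
    exact (List.idxOf_inj (hVmem u (mem_filter.1 hu).1)).1 huw
  have hdisj : Disjoint (early.image σ.idxOf) {s ∈ S | s < p} := by
    refine disjoint_left.2 fun x hx hxS => ?_
    obtain ⟨u, -, rfl⟩ := mem_image.1 hx
    exact idxOf_notMem_repeats u (hS (mem_filter.1 hxS).1)
  have hunion : early.image σ.idxOf ∪ {s ∈ S | s < p} ⊆ {x ∈ T | x < p} := by
    refine union_subset (fun x hx => ?_) (monotone_filter_left _ hST)
    obtain ⟨u, hu, rfl⟩ := mem_image.1 hx
    obtain ⟨huV, -, hup⟩ := mem_filter.1 hu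
    obtain ⟨i, hi, rfl⟩ := mem_image.1 huV
    exact mem_filter.2 ⟨hclosed i hi, hup⟩
  calc rank V v ≤ #(early.image σ.idxOf) + rank S p := by rw [hsplit, hearly]; omega
    _ = #(early.image σ.idxOf ∪ {s ∈ S | s < p}) := (card_union_of_disjoint hdisj).symm
    _ ≤ rank T p := card_le_card hunion
    _ ≤ rank T t := rank_mono T (idxOf_getD_le (mem_range.1 (hT ht)))

end FirstOccurrences

section FirstOccurrenceClosure

variable {σ : List ℕ} {U : Finset ℕ}

def withFirstOccurrences (σ : List ℕ) (U : Finset ℕ) : Finset ℕ :=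
  U ∪ U.image fun i => σ.idxOf (σ.getD i 0)

lemma subset_withFirstOccurrences : U ⊆ withFirstOccurrences σ U := subset_union_left

lemma card_withFirstOccurrences_le : #(withFirstOccurrences σ U) ≤ 2 * #U :=
  (card_union_le _ _).trans (by rw [two_mul]; exact Nat.add_le_add_left card_image_le _)

lemma getD_idxOf_getD_of_mem (hU : U ⊆ range σ.length) {i : ℕ} (hi : i ∈ U) :
    σ.getD (σ.idxOf (σ.getD i 0)) 0 = σ.getD i 0 :=
  getD_idxOf (getD_mem (mem_range.1 (hU hi)))

lemma withFirstOccurrences_subset_range (hU : U ⊆ range σ.length) :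
    withFirstOccurrences σ U ⊆ range σ.length := by
  refine union_subset hU fun x hx => ?_
  obtain ⟨i, hi, rfl⟩ := mem_image.1 hx
  have hi := mem_range.1 (hU hi)
  exact mem_range.2 ((idxOf_getD_le hi).trans_lt hi)

lemma image_getD_withFirstOccurrences (hU : U ⊆ range σ.length) :
    (withFirstOccurrences σ U).image (σ.getD · 0) = U.image (σ.getD · 0) := by
  rw [withFirstOccurrences, image_union, image_image, union_eq_left]
  intro x hx
  obtain ⟨i, hi, rfl⟩ := mem_image.1 hx
  exact mem_image.2 ⟨i, hi, (getD_idxOf_getD_of_mem hU hi).symm⟩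

lemma idxOf_getD_mem_withFirstOccurrences (hU : U ⊆ range σ.length) {t : ℕ}
    (ht : t ∈ withFirstOccurrences σ U) :
    σ.idxOf (σ.getD t 0) ∈ withFirstOccurrences σ U := by
  rcases mem_union.1 ht with ht | ht
  · exact mem_union_right _ (mem_image_of_mem _ ht)
  · obtain ⟨i, hi, rfl⟩ := mem_image.1 ht
    rw [getD_idxOf_getD_of_mem hU hi]
    exact mem_union_right _ ht

end FirstOccurrenceClosure

namespace IsInvSeq

variable {σ : List ℕ}

lemma le_idxOf (hσ : IsInvSeq σ) {v : ℕ} (hv : v ∈ σ) : v ≤ σ.idxOf v := by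
  have h := hσ _ (List.idxOf_lt_length_of_mem hv)
  rwa [getD_idxOf hv] at h

/-- A value `u < v` first occurring after `v` is missing from the first `v` entries, and in an
inversion sequence those entries take values below `v` only. -/
lemma card_late_le (hσ : IsInvSeq σ) {v : ℕ} (hv : v ∈ σ) (V : Finset ℕ) :
    #{u ∈ V | u < v ∧ σ.idxOf v ≤ σ.idxOf u} ≤ rank (repeats σ) v := by
  have hvp := hσ.le_idxOf hv
  have hvN : v ≤ σ.length := hvp.trans (List.idxOf_lt_length_of_mem hv).le
  have himage : (range v).image (σ.getD · 0) ⊆ range v := by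
    intro x hx
    obtain ⟨j, hj, rfl⟩ := mem_image.1 hx
    have hj := mem_range.1 hj
    exact mem_range.2 ((hσ j (hj.trans_le hvN)).trans_lt hj)
  have hlate :
      {u ∈ V | u < v ∧ σ.idxOf v ≤ σ.idxOf u} ⊆ range v \ (range v).image (σ.getD · 0) := by
    intro u hu
    obtain ⟨-, huv, hpu⟩ := mem_filter.1 hu
    refine mem_sdiff.2 ⟨mem_range.2 huv, fun hmem => ?_⟩
    obtain ⟨j, hj, rfl⟩ := mem_image.1 hmem
    have hj := mem_range.1 hj
    have := idxOf_getD_le (hj.trans_le hvN)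
    omega
  have := le_card_image_add_rank_repeats hvN
  have := card_le_card hlate
  rw [card_sdiff_of_subset himage, card_range] at this
  omega

theorem exists_padding (hσ : IsInvSeq σ) {W : Finset ℕ} (hW : W ⊆ range σ.length) :
    ∃ T, W ⊆ T ∧ T ⊆ range σ.length ∧ #T ≤ 4 * #W ∧
      ∀ t ∈ T, rank (T.image (σ.getD · 0)) (σ.getD t 0) ≤ rank T t := by
  obtain ⟨S, hSrep, hScard, hSinit⟩ := exists_initial_segment (repeats σ) #W
  have hU : W ∪ S ⊆ range σ.length := union_subset hW (hSrep.trans repeats_subset_range)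
  set T := withFirstOccurrences σ (W ∪ S)
  have hST : S ⊆ T := subset_union_right.trans subset_withFirstOccurrences
  refine ⟨T, subset_union_left.trans subset_withFirstOccurrences,
    withFirstOccurrences_subset_range hU, ?_, fun t ht => ?_⟩
  · have := card_union_le W S
    have : #T ≤ 2 * #(W ∪ S) := card_withFirstOccurrences_le
    omega
  have htN := mem_range.1 (withFirstOccurrences_subset_range hU ht)
  refine rank_image_getD_le (withFirstOccurrences_subset_range hU)
    (fun _ => idxOf_getD_mem_withFirstOccurrences hU) hST hSrep ht ?_
  set v := σ.getD t 0
  have hv : v ∈ σ := getD_mem htN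
  have hvp := hσ.le_idxOf hv
  rcases hSinit v with hsub | ⟨hSW, hSv⟩
  · calc _ ≤ rank (repeats σ) v := hσ.card_late_le hv _
      _ ≤ rank S (σ.idxOf v) := card_le_card fun x hx =>
        mem_filter.2 ⟨hsub hx, (mem_filter.1 hx).2.trans_le hvp⟩
  -- once `S` fills up below `v`, its own values first occur before `v` and are never late
  · have hlateW : {u ∈ T.image (σ.getD · 0) | u < v ∧ σ.idxOf v ≤ σ.idxOf u}
        ⊆ W.image (σ.getD · 0) := by
      intro u hu
      obtain ⟨huT, -, hpu⟩ := mem_filter.1 hu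
      rw [image_getD_withFirstOccurrences hU, image_union] at huT
      refine (mem_union.1 huT).resolve_right fun huS => ?_
      obtain ⟨s, hs, rfl⟩ := mem_image.1 huS
      have := idxOf_getD_lt_of_mem_repeats (hSrep hs)
      have := hSv s hs
      omega
    calc _ ≤ #(W.image (σ.getD · 0)) := card_le_card hlateW
      _ ≤ #W := card_image_le
      _ = rank S (σ.idxOf v) := by
        rw [rank_eq_card fun x hx => (hSv x hx).trans_le hvp, hSW]

end IsInvSeq

lemma isInvSeq_red_subseqAt {σ : List ℕ} {T : Finset ℕ}
    (hT : ∀ t ∈ T, rank (T.image (σ.getD · 0)) (σ.getD t 0) ≤ rank T t) :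
    IsInvSeq (red (subseqAt σ T)) := by
  intro i hi
  rw [length_red] at hi
  have hi' : i < T.sort.length := by simpa using hi
  rw [getD_red hi, toFinset_subseqAt, getD_subseqAt hi']
  exact (hT _ ((mem_sort _).1 (List.getElem_mem hi'))).trans_eq (rank_sort_getElem T hi')

theorem IsInvSeq.exists_short_cayley_between {σ ρ : List ℕ} (hσ : IsInvSeq σ)
    (h : ContainsPat σ ρ) :
    ∃ q, IsInvSeq q ∧ IsCayley q ∧ q.length ≤ 4 * ρ.length ∧
      ContainsPat q ρ ∧ ContainsPat σ q := by
  obtain ⟨τ, hτ, hρτ⟩ := h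
  obtain ⟨W, hW, rfl⟩ := exists_subseqAt_eq_of_sublist hτ
  obtain ⟨T, hWT, hT, hcard, hrank⟩ := hσ.exists_padding hW
  have hred := ordIso_red (subseqAt σ T)
  refine ⟨red (subseqAt σ T), isInvSeq_red_subseqAt hrank, isCayley_red _, ?_,
    (ContainsPat.of_ordIso hred).trans ⟨subseqAt σ W, subseqAt_sublist_subseqAt hWT, hρτ⟩,
    ⟨subseqAt σ T, subseqAt_sublist hT, hred⟩⟩
  simpa [hρτ.1] using hcard

lemma IsInvSeq.forall_mem_lt {q : List ℕ} (hq : IsInvSeq q) : ∀ x ∈ q, x < q.length := by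
  intro x hx
  obtain ⟨i, hi, rfl⟩ := List.getElem_of_mem hx
  have := hq i hi
  rw [List.getD_eq_getElem _ _ hi] at this
  omega

lemma finite_setOf_isInvSeq_length_le (n : ℕ) : {q | IsInvSeq q ∧ q.length ≤ n}.Finite := by
  refine ((List.finite_length_le (Fin n) n).image (List.map Fin.val)).subset fun q hq => ?_
  obtain ⟨hinv, hlen⟩ := hq
  refine ⟨q.attach.map fun x => ⟨x.1, (hinv.forall_mem_lt x.1 x.2).trans_le hlen⟩,
    by simpa using hlen, by simp⟩

theorem stmt15_general (P : Finset (List ℕ)) :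
    ∃ Q : Finset (List ℕ), (∀ q ∈ Q, IsInvSeq q ∧ IsCayley q) ∧
      ∀ σ : List ℕ, IsInvSeq σ →
        ((∀ ρ ∈ P, ¬ ContainsPat σ ρ) ↔ (∀ q ∈ Q, ¬ ContainsPat σ q)) := by
  have hfin : (⋃ ρ ∈ P, {q | IsInvSeq q ∧ IsCayley q ∧ q.length ≤ 4 * ρ.length ∧
      ContainsPat q ρ}).Finite :=
    P.finite_toSet.biUnion fun ρ _ => (finite_setOf_isInvSeq_length_le (4 * ρ.length)).subset
      fun q hq => ⟨hq.1, hq.2.2.1⟩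
  refine ⟨hfin.toFinset, fun q hq => ?_,
    fun σ hσ => ⟨fun hP q hq hσq => ?_, fun hQ ρ hρ hσρ => ?_⟩⟩
  · obtain ⟨ρ, -, hq⟩ := Set.mem_iUnion₂.1 (hfin.mem_toFinset.1 hq)
    exact ⟨hq.1, hq.2.1⟩
  · obtain ⟨ρ, hρ, hq⟩ := Set.mem_iUnion₂.1 (hfin.mem_toFinset.1 hq)
    exact hP ρ hρ (hσq.trans hq.2.2.2)
  · obtain ⟨q, hq, hqC, hqlen, hqρ, hσq⟩ := hσ.exists_short_cayley_between hσρ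
    exact hQ q (hfin.mem_toFinset.2 (Set.mem_iUnion₂.2 ⟨ρ, hρ, hq, hqC, hqlen, hqρ⟩)) hσq

theorem stmt15 (P : Finset (List ℕ)) (hP : ∀ ρ ∈ P, ρ ≠ [] ∧ IsCayley ρ) :
    ∃ Q : Finset (List ℕ), (∀ q ∈ Q, IsInvSeq q ∧ IsCayley q) ∧
      ∀ σ : List ℕ, IsInvSeq σ →
        ((∀ ρ ∈ P, ¬ ContainsPat σ ρ) ↔ (∀ q ∈ Q, ¬ ContainsPat σ q)) :=
  stmt15_general P
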